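/- arXiv:1701.08417 — 3 statements merged into one kernel-verified Lean document; each statement's English description precedes it below -/
import Mathlib

section
/- A finite simple graph G is bψ-perfect (for every induced subgraph H, the b-chromatic number of H equals the pseudoachromatic number of H) if and only if G is Bψ-perfect (for every induced subgraph H, the pseudo-b-chromatic number of H equals the pseudoachromatic number of H). -/
/-!
Every dominating colouring is complete, and `b` only adds properness, so `b ≤ B ≤ ψ`; this gives
one direction. Conversely, `P₄`, `C₄`, `P₃ ∪ K₂` and `3K₂` all have `ψ = 3` but `B = 2`, so a
Bψ-perfect graph contains none of them as an induced subgraph. In such a graph every complete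
colouring is witnessed by a clique meeting all colour classes: delete an isolated vertex, or a
universal vertex together with its colour class (by Wolk's theorem a connected `{P₄, C₄}`-free
graph has one), and induct; what remains is a disjoint union of two cliques. Hence `ψ ≤ ω ≤ χ ≤ b`,
the last because a proper colouring with the fewest colours is dominating.
-/

open SimpleGraph

/-- A `k`-coloring `c` of `G` is *complete* if it is surjective and for every pair of distinct
colors there is an edge of `G` whose endpoints receive those two colors. -/
def IsCompleteColoring {V : Type*} (G : SimpleGraph V) {k : ℕ} (c : V → Fin k) : Prop :=
  Function.Surjective c ∧
    ∀ i j : Fin k, i ≠ j → ∃ u v : V, G.Adj u v ∧ c u = i ∧ c v = j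

/-- A coloring is *proper* if adjacent vertices receive distinct colors. -/
def IsProperColoring {V : Type*} (G : SimpleGraph V) {k : ℕ} (c : V → Fin k) : Prop :=
  ∀ u v : V, G.Adj u v → c u ≠ c v

/-- A `k`-coloring `c` of `G` is *dominating* if it is surjective and every color class contains
a vertex having a neighbor in every other color class. -/
def IsDominatingColoring {V : Type*} (G : SimpleGraph V) {k : ℕ} (c : V → Fin k) : Prop :=
  Function.Surjective c ∧
    ∀ i : Fin k, ∃ v : V, c v = i ∧ ∀ j : Fin k, j ≠ i → ∃ u : V, G.Adj v u ∧ c u = j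

/-- A `k`-coloring `c` of `G` is *pseudo-Grundy* if it is surjective and every vertex is
adjacent to at least one vertex of each smaller color. -/
def IsPseudoGrundyColoring {V : Type*} (G : SimpleGraph V) {k : ℕ} (c : V → Fin k) : Prop :=
  Function.Surjective c ∧
    ∀ v : V, ∀ j : Fin k, j < c v → ∃ u : V, G.Adj v u ∧ c u = j

/-- The pseudoachromatic number `ψ(G)`: the largest `k` admitting a complete `k`-coloring. -/
noncomputable def pseudoachromaticNumber {V : Type*} (G : SimpleGraph V) : ℕ :=
  sSup {k | ∃ c : V → Fin k, IsCompleteColoring G c}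

/-- The achromatic number `α(G)`: the largest `k` admitting a proper complete `k`-coloring. -/
noncomputable def achromaticNumber {V : Type*} (G : SimpleGraph V) : ℕ :=
  sSup {k | ∃ c : V → Fin k, IsProperColoring G c ∧ IsCompleteColoring G c}

/-- The b-chromatic number `b(G)`: the largest `k` admitting a proper dominating `k`-coloring. -/
noncomputable def bChromaticNumber {V : Type*} (G : SimpleGraph V) : ℕ :=
  sSup {k | ∃ c : V → Fin k, IsProperColoring G c ∧ IsDominatingColoring G c}

/-- The pseudo-b-chromatic number `B(G)`: the largest `k` admitting a dominating `k`-coloring. -/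
noncomputable def pseudoBChromaticNumber {V : Type*} (G : SimpleGraph V) : ℕ :=
  sSup {k | ∃ c : V → Fin k, IsDominatingColoring G c}

/-- The Grundy number `Γ(G)`: the largest `k` admitting a proper pseudo-Grundy `k`-coloring. -/
noncomputable def grundyNumber {V : Type*} (G : SimpleGraph V) : ℕ :=
  sSup {k | ∃ c : V → Fin k, IsProperColoring G c ∧ IsPseudoGrundyColoring G c}

/-- The pseudo-Grundy number `γ(G)`: the largest `k` admitting a pseudo-Grundy `k`-coloring. -/
noncomputable def pseudoGrundyNumber {V : Type*} (G : SimpleGraph V) : ℕ :=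
  sSup {k | ∃ c : V → Fin k, IsPseudoGrundyColoring G c}

/-- `G` contains the complete graph `K_k` as a minor: there are `k` pairwise disjoint
"branch sets", each inducing a connected (nonempty) subgraph, with an edge of `G` between
every two of them. -/
def HasCompleteMinor {V : Type*} (G : SimpleGraph V) (k : ℕ) : Prop :=
  ∃ B : Fin k → Set V,
    (∀ i, (G.induce (B i)).Connected) ∧
    (∀ i j : Fin k, i ≠ j → Disjoint (B i) (B j)) ∧
    (∀ i j : Fin k, i ≠ j → ∃ u ∈ B i, ∃ v ∈ B j, G.Adj u v)

/-- The Hadwiger number `h(G)`: the largest `k` such that `K_k` is a minor of `G`. -/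
noncomputable def hadwigerNumber {V : Type*} (G : SimpleGraph V) : ℕ :=
  sSup {k | HasCompleteMinor G k}

/-- `G` has an induced subgraph isomorphic to `H`. -/
def HasInducedCopy {V : Type*} {W : Type*} (G : SimpleGraph V) (H : SimpleGraph W) : Prop :=
  ∃ s : Set V, Nonempty (G.induce s ≃g H)

/-- A graph is *chordal* if it has no induced cycle on four or more vertices. -/
def IsChordal {V : Type*} (G : SimpleGraph V) : Prop :=
  ∀ n : ℕ, 4 ≤ n → ¬ HasInducedCopy G (cycleGraph n)

/-- The diamond graph `D`: `K₄` minus one edge. -/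
def diamondGraph : SimpleGraph (Fin 4) :=
  (⊤ : SimpleGraph (Fin 4)).deleteEdges {s(0, 1)}

section

variable {V W ι : Type*}

section Colorings

variable {G : SimpleGraph V} {k : ℕ} {c : V → Fin k}

theorem IsDominatingColoring.isCompleteColoring (h : IsDominatingColoring G c) :
    IsCompleteColoring G c := by
  refine ⟨h.1, fun i j hij => ?_⟩
  obtain ⟨v, rfl, hv⟩ := h.2 i
  obtain ⟨u, hvu, rfl⟩ := hv j hij.symm
  exact ⟨v, u, hvu, rfl, rfl⟩

theorem IsDominatingColoring.comp {m : ℕ} (h : IsDominatingColoring G c) {f : Fin k → Fin m}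
    (hf : Function.Surjective f) : IsDominatingColoring G (f ∘ c) := by
  refine ⟨hf.comp h.1, fun i => ?_⟩
  obtain ⟨i', rfl⟩ := hf i
  obtain ⟨v, rfl, hv⟩ := h.2 i'
  refine ⟨v, rfl, fun j hj => ?_⟩
  obtain ⟨j', rfl⟩ := hf j
  obtain ⟨u, hvu, rfl⟩ := hv j' fun h => hj (h ▸ rfl)
  exact ⟨u, hvu, rfl⟩

theorem bddAbove_setOf_exists_surjective [Finite V] {P : ∀ {k : ℕ}, (V → Fin k) → Prop}
    (hP : ∀ {k} {c : V → Fin k}, P c → Function.Surjective c) :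
    BddAbove {k | ∃ c : V → Fin k, P c} :=
  ⟨Nat.card V, fun k ⟨c, hc⟩ => by simpa using Nat.card_le_card_of_surjective c (hP hc)⟩

theorem le_pseudoachromaticNumber [Finite V] (hc : IsCompleteColoring G c) :
    k ≤ pseudoachromaticNumber G :=
  le_csSup (bddAbove_setOf_exists_surjective And.left) ⟨c, hc⟩

theorem le_bChromaticNumber [Finite V] (hp : IsProperColoring G c)
    (hd : IsDominatingColoring G c) : k ≤ bChromaticNumber G :=
  le_csSup (bddAbove_setOf_exists_surjective fun hc => hc.2.1) ⟨c, hp, hd⟩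

variable (G) in
theorem pseudoBChromaticNumber_le_pseudoachromaticNumber [Finite V] :
    pseudoBChromaticNumber G ≤ pseudoachromaticNumber G :=
  csSup_le_csSup' (bddAbove_setOf_exists_surjective And.left) fun _ ⟨c, hc⟩ =>
    ⟨c, hc.isCompleteColoring⟩

variable (G) in
theorem bChromaticNumber_le_pseudoBChromaticNumber [Finite V] :
    bChromaticNumber G ≤ pseudoBChromaticNumber G :=
  csSup_le_csSup' (bddAbove_setOf_exists_surjective And.left) fun _ ⟨c, hc⟩ => ⟨c, hc.2⟩

theorem pseudoBChromaticNumber_le_two (h : ∀ c : V → Fin 3, ¬IsDominatingColoring G c) :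
    pseudoBChromaticNumber G ≤ 2 := by
  refine csSup_le' fun k ⟨c, hc⟩ => ?_
  by_contra! hk
  exact h _ (hc.comp (f := fun i => ⟨min i 2, by omega⟩) fun j =>
    ⟨⟨j, by omega⟩, Fin.ext (by dsimp only; omega)⟩)

end Colorings

section MinimalColoring

variable {G : SimpleGraph V}

/-- Recolour every vertex of colour `i` with a colour missing from its neighbourhood. -/
theorem colorable_sub_one_of_forall_exists_missing {n : ℕ} {c : V → Fin n}
    (hc : IsProperColoring G c) (i : Fin n)
    (hi : ∀ v, c v = i → ∃ j ≠ i, ∀ u, G.Adj v u → c u ≠ j) : G.Colorable (n - 1) := by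
  choose j hji hj using hi
  let c' : V → {x : Fin n | x ≠ i} := fun v =>
    if h : c v = i then ⟨j v h, hji v h⟩ else ⟨c v, h⟩
  have hc' : ∀ {u v}, G.Adj u v → c' u ≠ c' v := by
    intro u v huv
    simp only [c', ne_eq]
    split_ifs with hu hv hv <;> simp only [Subtype.mk.injEq]
    · exact absurd (hu.trans hv.symm) (hc u v huv)
    · exact fun h => hj u hu v huv h.symm
    · exact hj v hv u huv.symm
    · exact hc u v huv
  simpa only [Set.card_ne_eq, Fintype.card_fin] using (Coloring.mk c' hc').colorable

/-- A proper colouring with the fewest colours is dominating. -/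
theorem exists_isProperColoring_isDominatingColoring [Finite V] (G : SimpleGraph V) :
    ∃ n, ∃ c : V → Fin n, IsProperColoring G c ∧ IsDominatingColoring G c := by
  classical
  have := Fintype.ofFinite V
  have hex : ∃ n, G.Colorable n := ⟨_, G.colorable_of_fintype⟩
  obtain ⟨C⟩ := Nat.find_spec hex
  have hdom : ∀ i, ∃ v, C v = i ∧ ∀ j, j ≠ i → ∃ u, G.Adj v u ∧ C u = j := by
    intro i
    by_contra! h
    have := i.pos
    have := Nat.find_min' hex (colorable_sub_one_of_forall_exists_missing
      (fun _ _ huv => C.valid huv) i h)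
    omega
  exact ⟨_, C, fun _ _ huv => C.valid huv, fun i => (hdom i).imp fun _ h => h.1, hdom⟩

theorem le_bChromaticNumber_of_hom [Finite V] {k : ℕ} (f : (⊤ : SimpleGraph (Fin k)) →g G) :
    k ≤ bChromaticNumber G := by
  obtain ⟨n, c, hp, hd⟩ := exists_isProperColoring_isDominatingColoring G
  have hinj : Function.Injective (c ∘ f) := fun i j h => by
    by_contra hij
    exact hp _ _ (f.map_rel hij) h
  have hkn : k ≤ n := by simpa using Fintype.card_le_of_injective _ hinj
  exact hkn.trans (le_bChromaticNumber hp hd)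

end MinimalColoring

section ThreeColorings

variable {H : SimpleGraph W}

theorem isCompleteColoring_of_adj {c : W → Fin 3} (h₀₁ : ∃ u v, H.Adj u v ∧ c u = 0 ∧ c v = 1)
    (h₁₂ : ∃ u v, H.Adj u v ∧ c u = 1 ∧ c v = 2) (h₂₀ : ∃ u v, H.Adj u v ∧ c u = 2 ∧ c v = 0) :
    IsCompleteColoring H c := by
  obtain ⟨a, b, hab, ha, hb⟩ := h₀₁
  obtain ⟨d, e, hde, hd, he⟩ := h₁₂
  obtain ⟨f, g, hfg, hf, hg⟩ := h₂₀
  refine ⟨fun i => ?_, fun i j hij => ?_⟩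
  · fin_cases i
    exacts [⟨a, ha⟩, ⟨b, hb⟩, ⟨e, he⟩]
  · fin_cases i <;> fin_cases j <;> simp at hij
    exacts [⟨a, b, hab, ha, hb⟩, ⟨g, f, hfg.symm, hg, hf⟩, ⟨b, a, hab.symm, hb, ha⟩,
      ⟨d, e, hde, hd, he⟩, ⟨f, g, hfg, hf, hg⟩, ⟨e, d, hde.symm, he, hd⟩]

theorem fin_three_eq_of_forall_ne {x y a b : Fin 3} (hx : ∀ j, j ≠ x → j = a ∨ j = b)
    (hy : ∀ j, j ≠ y → j = a ∨ j = b) : x = y := by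
  revert x y a b
  decide

/-- A dominating vertex sees the two other colours, so if its neighbourhood lies in `{p, q}` its
colour is the one missing from `{c p, c q}`; two colour classes cannot share such a pair. -/
theorem not_isDominatingColoring_of_forall_neighbors {p q p' q' : W}
    (h : ∀ v, (∀ u, H.Adj v u → u = p ∨ u = q) ∨ (∀ u, H.Adj v u → u = p' ∨ u = q') ∨
      ∀ u u', H.Adj v u → H.Adj v u' → u = u') (c : W → Fin 3) :
    ¬IsDominatingColoring H c := by
  intro hc
  have hsees : ∀ {i v r r'}, (∀ j, j ≠ i → ∃ u, H.Adj v u ∧ c u = j) →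
      (∀ u, H.Adj v u → u = r ∨ u = r') → ∀ j, j ≠ i → j = c r ∨ j = c r' := by
    intro i v r r' hv hN j hj
    obtain ⟨u, hvu, rfl⟩ := hv j hj
    rcases hN u hvu with rfl | rfl <;> simp
  have hclass : ∀ i, (∀ j, j ≠ i → j = c p ∨ j = c q) ∨ ∀ j, j ≠ i → j = c p' ∨ j = c q' := by
    intro i
    obtain ⟨v, -, hv⟩ := hc.2 i
    rcases h v with hN | hN | hN
    · exact .inl (hsees hv hN)
    · exact .inr (hsees hv hN)
    · have hsucc : ∀ i : Fin 3, i + 1 ≠ i := by decide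
      obtain ⟨u, hvu, -⟩ := hv (i + 1) (hsucc i)
      have hone : ∀ x a : Fin 3, ¬∀ j, j ≠ x → j = a ∨ j = a := by decide
      exact absurd (hsees hv fun u' hvu' => .inl (hN u' u hvu' hvu)) (hone i (c u))
  rcases hclass 0 with h₀ | h₀ <;> rcases hclass 1 with h₁ | h₁ <;> rcases hclass 2 with h₂ | h₂
  all_goals first
    | exact absurd (fin_three_eq_of_forall_ne h₀ h₁) (by decide)
    | exact absurd (fin_three_eq_of_forall_ne h₀ h₂) (by decide)
    | exact absurd (fin_three_eq_of_forall_ne h₁ h₂) (by decide)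

end ThreeColorings

section InducedThreeColorings

variable {G : SimpleGraph V} {s : Set V}

theorem pseudoBChromaticNumber_induce_lt [Finite V] (κ : V → Fin 3)
    (h₀₁ : ∃ u ∈ s, ∃ v ∈ s, G.Adj u v ∧ κ u = 0 ∧ κ v = 1)
    (h₁₂ : ∃ u ∈ s, ∃ v ∈ s, G.Adj u v ∧ κ u = 1 ∧ κ v = 2)
    (h₂₀ : ∃ u ∈ s, ∃ v ∈ s, G.Adj u v ∧ κ u = 2 ∧ κ v = 0) {p q p' q' : V} (hp : p ∈ s)
    (hq : q ∈ s) (hp' : p' ∈ s) (hq' : q' ∈ s)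
    (h : ∀ v ∈ s, (∀ u ∈ s, G.Adj v u → u = p ∨ u = q) ∨ (∀ u ∈ s, G.Adj v u → u = p' ∨ u = q') ∨
      ∀ u ∈ s, ∀ u' ∈ s, G.Adj v u → G.Adj v u' → u = u') :
    pseudoBChromaticNumber (G.induce s) < pseudoachromaticNumber (G.induce s) := by
  obtain ⟨a, ha, b, hb, h₀₁⟩ := h₀₁
  obtain ⟨c, hc, d, hd, h₁₂⟩ := h₁₂
  obtain ⟨e, he, f, hf, h₂₀⟩ := h₂₀
  refine (pseudoBChromaticNumber_le_two fun c => ?_).trans_lt (le_pseudoachromaticNumber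
    (c := fun x : s => κ x) (isCompleteColoring_of_adj ⟨⟨a, ha⟩, ⟨b, hb⟩, h₀₁⟩
      ⟨⟨c, hc⟩, ⟨d, hd⟩, h₁₂⟩ ⟨⟨e, he⟩, ⟨f, hf⟩, h₂₀⟩))
  exact not_isDominatingColoring_of_forall_neighbors (p := ⟨p, hp⟩) (q := ⟨q, hq⟩)
    (p' := ⟨p', hp'⟩) (q' := ⟨q', hq'⟩) (fun v => by simpa [Subtype.ext_iff] using h v v.2) c

theorem pseudoBChromaticNumber_lt_of_isP4OrC4 [Finite V] {a b c d : V} (hab : G.Adj a b)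
    (hbc : G.Adj b c) (hcd : G.Adj c d) (hac : ¬G.Adj a c) (hbd : ¬G.Adj b d) (hac' : a ≠ c)
    (hbd' : b ≠ d) :
    pseudoBChromaticNumber (G.induce {a, b, c, d}) <
      pseudoachromaticNumber (G.induce {a, b, c, d}) := by
  classical
  refine pseudoBChromaticNumber_induce_lt (fun x => if x = b then 1 else if x = c then 2 else 0)
    ⟨a, ?_, b, ?_, hab, ?_⟩ ⟨b, ?_, c, ?_, hbc, ?_⟩ ⟨c, ?_, d, ?_, hcd, ?_⟩
    (p := b) (q := d) (p' := a) (q' := c) ?_ ?_ ?_ ?_ ?_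
  all_goals aesop (add norm simp G.adj_comm)

theorem pseudoBChromaticNumber_lt_of_isP3K2 [Finite V] {a b c d e : V} (hab : G.Adj a b)
    (hbc : G.Adj b c) (hac : ¬G.Adj a c) (hac' : a ≠ c) (hde : G.Adj d e) (had : ¬G.Adj a d)
    (hae : ¬G.Adj a e) (hbd : ¬G.Adj b d) (hbe : ¬G.Adj b e) (hcd : ¬G.Adj c d)
    (hce : ¬G.Adj c e) :
    pseudoBChromaticNumber (G.induce {a, b, c, d, e}) <
      pseudoachromaticNumber (G.induce {a, b, c, d, e}) := by
  classical
  refine pseudoBChromaticNumber_induce_lt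
    (fun x => if x = b then 1 else if x = c ∨ x = d then 2 else 0)
    ⟨a, ?_, b, ?_, hab, ?_⟩ ⟨b, ?_, c, ?_, hbc, ?_⟩ ⟨d, ?_, e, ?_, hde, ?_⟩
    (p := a) (q := c) (p' := a) (q' := c) ?_ ?_ ?_ ?_ ?_
  all_goals aesop (add norm simp G.adj_comm)

theorem pseudoBChromaticNumber_lt_of_is3K2 [Finite V] {a b c d e f : V} (hab : G.Adj a b)
    (hcd : G.Adj c d) (hef : G.Adj e f) (hac : ¬G.Adj a c) (had : ¬G.Adj a d)
    (hae : ¬G.Adj a e) (haf : ¬G.Adj a f) (hbc : ¬G.Adj b c) (hbd : ¬G.Adj b d)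
    (hbe : ¬G.Adj b e) (hbf : ¬G.Adj b f) (hce : ¬G.Adj c e) (hcf : ¬G.Adj c f)
    (hde : ¬G.Adj d e) (hdf : ¬G.Adj d f) :
    pseudoBChromaticNumber (G.induce {a, b, c, d, e, f}) <
      pseudoachromaticNumber (G.induce {a, b, c, d, e, f}) := by
  classical
  refine pseudoBChromaticNumber_induce_lt
    (fun x => if x = b ∨ x = c then 1 else if x = d ∨ x = e then 2 else 0)
    ⟨a, ?_, b, ?_, hab, ?_⟩ ⟨c, ?_, d, ?_, hcd, ?_⟩ ⟨e, ?_, f, ?_, hef, ?_⟩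
    (p := a) (q := a) (p' := a) (q' := a) ?_ ?_ ?_ ?_ ?_
  all_goals aesop (add norm simp G.adj_comm)

end InducedThreeColorings

namespace SimpleGraph

/-- `G` has no induced `P₄` and no induced `C₄`. -/
structure IsTriviallyPerfect (G : SimpleGraph V) : Prop where
  not_isP4 : ∀ a b c d, G.Adj a b → G.Adj b c → G.Adj c d → ¬G.Adj a c → ¬G.Adj b d →
    ¬G.Adj a d → False
  not_isC4 : ∀ a b c d, G.Adj a b → G.Adj b c → G.Adj c d → G.Adj d a → ¬G.Adj a c →
    ¬G.Adj b d → a ≠ c → b ≠ d → False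

/-- `G` has none of `P₄`, `C₄`, `P₃ ∪ K₂`, `3K₂` as an induced subgraph; each of them has
`B = 2 < 3 = ψ`. -/
structure IsObstructionFree (G : SimpleGraph V) : Prop extends G.IsTriviallyPerfect where
  not_isP3K2 : ∀ a b c d e, G.Adj a b → G.Adj b c → ¬G.Adj a c → a ≠ c → G.Adj d e →
    ¬G.Adj a d → ¬G.Adj a e → ¬G.Adj b d → ¬G.Adj b e → ¬G.Adj c d → ¬G.Adj c e → False
  not_is3K2 : ∀ a b c d e f, G.Adj a b → G.Adj c d → G.Adj e f →
    ¬G.Adj a c → ¬G.Adj a d → ¬G.Adj a e → ¬G.Adj a f → ¬G.Adj b c → ¬G.Adj b d →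
    ¬G.Adj b e → ¬G.Adj b f → ¬G.Adj c e → ¬G.Adj c f → ¬G.Adj d e → ¬G.Adj d f → False

variable {G : SimpleGraph V} {H : SimpleGraph W}

theorem IsObstructionFree.induce (hG : G.IsObstructionFree) (s : Set V) :
    (G.induce s).IsObstructionFree where
  not_isP4 a b c d := hG.not_isP4 a b c d
  not_isC4 a b c d hab hbc hcd hda hac hbd hac' hbd' :=
    hG.not_isC4 a b c d hab hbc hcd hda hac hbd (Subtype.coe_ne_coe.2 hac')
      (Subtype.coe_ne_coe.2 hbd')
  not_isP3K2 a b c d e hab hbc hac hac' :=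
    hG.not_isP3K2 a b c d e hab hbc hac (Subtype.coe_ne_coe.2 hac')
  not_is3K2 a b c d e f := hG.not_is3K2 a b c d e f

theorem isObstructionFree_of_forall_pseudoBChromaticNumber_eq [Finite V]
    (h : ∀ s : Set V,
      pseudoBChromaticNumber (G.induce s) = pseudoachromaticNumber (G.induce s)) :
    G.IsObstructionFree where
  not_isP4 _ _ _ _ hab hbc hcd hac hbd had :=
    (h _).not_lt (pseudoBChromaticNumber_lt_of_isP4OrC4 hab hbc hcd hac hbd
      (fun h => had (h ▸ hcd)) (fun h => had (h ▸ hab)))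
  not_isC4 _ _ _ _ hab hbc hcd _ hac hbd hac' hbd' :=
    (h _).not_lt (pseudoBChromaticNumber_lt_of_isP4OrC4 hab hbc hcd hac hbd hac' hbd')
  not_isP3K2 _ _ _ _ _ hab hbc hac hac' hde had hae hbd hbe hcd hce :=
    (h _).not_lt
      (pseudoBChromaticNumber_lt_of_isP3K2 hab hbc hac hac' hde had hae hbd hbe hcd hce)
  not_is3K2 _ _ _ _ _ _ hab hcd hef hac had hae haf hbc hbd hbe hbf hce hcf hde hdf :=
    (h _).not_lt (pseudoBChromaticNumber_lt_of_is3K2 hab hcd hef hac had hae haf hbc hbd hbe hbf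
      hce hcf hde hdf)

/-- Excluding `P₄` and `C₄` through `x, y, v` forces `N(v) \ {y} ∪ {v, x} ⊆ N(y)`. -/
theorem IsTriviallyPerfect.degree_lt [Fintype W] [DecidableRel H.Adj] (hH : H.IsTriviallyPerfect)
    {v x y : W} (hvy : H.Adj v y) (hyx : H.Adj y x) (hxv : x ≠ v) (hvx : ¬H.Adj v x) :
    H.degree v < H.degree y := by
  classical
  have hN : ∀ z, H.Adj v z → z ≠ y → H.Adj z y := by
    intro z hvz hzy
    by_contra hzy'
    by_cases hxz : H.Adj x z
    · exact hH.not_isC4 x y v z hyx.symm hvy.symm hvz hxz.symm (fun h => hvx h.symm)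
        (fun h => hzy' h.symm) hxv hzy.symm
    · exact hH.not_isP4 x y v z hyx.symm hvy.symm hvz (fun h => hvx h.symm)
        (fun h => hzy' h.symm) hxz
  have hsub : insert x (H.neighborFinset v) ⊆ (insert y (H.neighborFinset y)).erase v := by
    intro z hz
    simp only [Finset.mem_insert, Finset.mem_erase, mem_neighborFinset] at hz ⊢
    rcases hz with rfl | hvz
    · exact ⟨hxv, .inr hyx⟩
    · refine ⟨(H.ne_of_adj hvz).symm, ?_⟩
      by_cases hzy : z = y
      exacts [.inl hzy, .inr (hN z hvz hzy).symm]
  refine Nat.add_one_le_iff.1 ?_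
  calc H.degree v + 1 = (insert x (H.neighborFinset v)).card := by
        rw [Finset.card_insert_of_notMem (by simpa using hvx), card_neighborFinset_eq_degree]
    _ ≤ ((insert y (H.neighborFinset y)).erase v).card := Finset.card_le_card hsub
    _ = H.degree y := by
        rw [Finset.card_erase_of_mem (by simp [hvy.symm]),
          Finset.card_insert_of_notMem (by simp), card_neighborFinset_eq_degree, Nat.add_sub_cancel]

/-- Wolk's theorem: a vertex of maximum degree is universal. -/
theorem IsTriviallyPerfect.exists_forall_adj [Finite W] (hH : H.IsTriviallyPerfect)
    (hconn : H.Connected) : ∃ v, ∀ u, u ≠ v → H.Adj v u := by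
  classical
  have := Fintype.ofFinite W
  have := hconn.nonempty
  obtain ⟨v, hv⟩ := Finite.exists_max (H.degree ·)
  have hreach : ∀ u, Relation.ReflTransGen H.Adj v u → u = v ∨ H.Adj v u := by
    intro u hu
    induction hu with
    | refl => exact .inl rfl
    | @tail z w _ hzw ih =>
      rcases ih with rfl | hvz
      · exact .inr hzw
      · exact or_iff_not_imp_left.2 fun hwv =>
          by_contra fun hvw => (hH.degree_lt hvz hzw hwv hvw).not_ge (hv z)
  exact ⟨v, fun u hu => (hreach u ((reachable_iff_reflTransGen v u).1
    (hconn.preconnected v u))).resolve_left hu⟩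

end SimpleGraph

/-- `IsCompleteColoring` with an arbitrary type of colours, so that colours can be deleted. -/
def IsCompleteColoring' (G : SimpleGraph V) (c : V → ι) : Prop :=
  Function.Surjective c ∧ ∀ i j, i ≠ j → ∃ u v, G.Adj u v ∧ c u = i ∧ c v = j

namespace IsCompleteColoring'

variable {H : SimpleGraph W} {c : W → ι}

theorem forall_exists_mem_or_forall_exists_notMem (hc : IsCompleteColoring' H c) {t : Set W}
    (ht : ∀ z w, H.Adj z w → (z ∈ t ↔ w ∈ t)) :
    (∀ i, ∃ v ∈ t, c v = i) ∨ ∀ i, ∃ v ∉ t, c v = i := by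
  by_contra! h
  obtain ⟨⟨i, hi⟩, ⟨j, hj⟩⟩ := h
  by_cases hij : i = j
  · subst hij
    obtain ⟨v, rfl⟩ := hc.1 i
    by_cases hv : v ∈ t
    exacts [hi v hv rfl, hj v hv rfl]
  · obtain ⟨u, v, huv, rfl, rfl⟩ := hc.2 i j hij
    by_cases hu : u ∈ t
    exacts [hi u hu rfl, hj v (fun hv => hu ((ht u v huv).2 hv)) rfl]

theorem induce_compl_singleton [Nontrivial ι] (hc : IsCompleteColoring' H c) {w : W}
    (hw : ∀ u, ¬H.Adj w u) : IsCompleteColoring' (H.induce {w}ᶜ) fun x => c x := by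
  have hne : ∀ {u v}, H.Adj u v → u ∈ ({w}ᶜ : Set W) := fun huv h => hw _ (h ▸ huv)
  refine ⟨fun i => ?_, fun i j hij => ?_⟩
  · obtain ⟨j, hj⟩ := exists_ne i
    obtain ⟨u, v, huv, rfl, -⟩ := hc.2 _ j hj.symm
    exact ⟨⟨u, hne huv⟩, rfl⟩
  · obtain ⟨u, v, huv, rfl, rfl⟩ := hc.2 i j hij
    exact ⟨⟨u, hne huv⟩, ⟨v, hne huv.symm⟩, huv, rfl, rfl⟩

theorem induce_ne (hc : IsCompleteColoring' H c) (i : ι) :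
    IsCompleteColoring' (H.induce {x | c x ≠ i}) fun x => (⟨c x, x.2⟩ : {j // j ≠ i}) := by
  refine ⟨fun ⟨j, hj⟩ => ?_, fun ⟨j, hj⟩ ⟨j', hj'⟩ hjj' => ?_⟩
  · obtain ⟨v, rfl⟩ := hc.1 j
    exact ⟨⟨v, hj⟩, rfl⟩
  · obtain ⟨u, v, huv, rfl, rfl⟩ := hc.2 j j' fun h => hjj' (Subtype.ext h)
    exact ⟨⟨u, hj⟩, ⟨v, hj'⟩, huv, rfl, rfl⟩

end IsCompleteColoring'

namespace SimpleGraph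

variable {H : SimpleGraph W}

theorem IsClique.nonempty_hom_of_forall_exists {t : Set W} (ht : H.IsClique t) {c : W → ι}
    (hc : ∀ i, ∃ v ∈ t, c v = i) : Nonempty ((⊤ : SimpleGraph ι) →g H) := by
  choose f hft hfc using hc
  exact ⟨⟨f, fun {i j} hij => ht (hft i) (hft j) fun h => hij (by rw [← hfc i, h, hfc j])⟩⟩

theorem nonempty_hom_of_forall_adj {c : W → ι} {v : W} (hv : ∀ u, u ≠ v → H.Adj v u)
    (g : (⊤ : SimpleGraph {j // j ≠ c v}) →g H.induce {x | c x ≠ c v}) :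
    Nonempty ((⊤ : SimpleGraph ι) →g H) := by
  classical
  have hgv : ∀ j, (g j : W) ≠ v := fun j h => (g j).2 (congrArg c h)
  refine ⟨⟨fun i => if h : i = c v then v else g ⟨i, h⟩, fun {i j} hij => ?_⟩⟩
  simp only [top_adj] at hij
  split_ifs with hi hj hj
  · exact absurd (hi.trans hj.symm) hij
  · exact hv _ (hgv _)
  · exact (hv _ (hgv _)).symm
  · exact g.map_rel (by simpa using hij)

/-- If `u` and `w` were not adjacent, they, `u'`, `w'` and the edge `pq` would induce `P₃ ∪ K₂`,
`P₄` or `3K₂`. -/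
theorem IsObstructionFree.adj_of_mem (hH : H.IsObstructionFree) {t : Set W}
    (ht : ∀ z w, H.Adj z w → (z ∈ t ↔ w ∈ t)) {p q : W} (hpq : H.Adj p q) (hp : p ∉ t)
    {u u' w w' : W} (hu : u ∈ t) (hw : w ∈ t) (huu' : H.Adj u u') (hww' : H.Adj w w')
    (huw : u ≠ w) : H.Adj u w := by
  by_contra h
  have hout : ∀ z ∈ t, ¬H.Adj z p ∧ ¬H.Adj z q := fun z hz =>
    ⟨fun hzp => hp ((ht z p hzp).1 hz), fun hzq => hp ((ht p q hpq).2 ((ht z q hzq).1 hz))⟩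
  obtain ⟨hup, huq⟩ := hout u hu
  obtain ⟨hu'p, hu'q⟩ := hout u' ((ht u u' huu').1 hu)
  obtain ⟨hwp, hwq⟩ := hout w hw
  obtain ⟨hw'p, hw'q⟩ := hout w' ((ht w w' hww').1 hw)
  by_cases h₁ : H.Adj u w'
  · exact hH.not_isP3K2 u w' w p q h₁ hww'.symm h huw hpq hup huq hw'p hw'q hwp hwq
  by_cases h₂ : H.Adj u' w
  · exact hH.not_isP3K2 u u' w p q huu' h₂ h huw hpq hup huq hu'p hu'q hwp hwq
  by_cases h₃ : H.Adj u' w'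
  · exact hH.not_isP4 u u' w' w huu' h₃ hww'.symm h₁ h₂ h
  · exact hH.not_is3K2 u u' w w' p q huu' hww' hpq h h₁ hup huq h₂ h₃ hu'p hu'q hwp hwq hw'p hw'q

/-- Without isolated vertices, a disconnected obstruction-free graph is the disjoint union of two
cliques, one of which carries every colour. -/
theorem IsObstructionFree.nonempty_hom_of_not_reachable (hH : H.IsObstructionFree) {c : W → ι}
    (hc : IsCompleteColoring' H c) (hiso : ∀ w, ∃ u, H.Adj w u) {x y : W}
    (hxy : ¬H.Reachable x y) : Nonempty ((⊤ : SimpleGraph ι) →g H) := by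
  let t : Set W := {z | H.Reachable x z}
  have ht : ∀ z w, H.Adj z w → (z ∈ t ↔ w ∈ t) := fun z w hzw =>
    ⟨fun h => h.trans hzw.reachable, fun h => h.trans hzw.symm.reachable⟩
  have hclique : ∀ {t : Set W}, (∀ z w, H.Adj z w → (z ∈ t ↔ w ∈ t)) → ∀ p ∉ t, H.IsClique t :=
    fun ht p hp u hu w hw huw => hH.adj_of_mem ht (hiso p).choose_spec hp hu hw
      (hiso u).choose_spec (hiso w).choose_spec huw
  rcases hc.forall_exists_mem_or_forall_exists_notMem ht with hcov | hcov
  · exact (hclique ht y hxy).nonempty_hom_of_forall_exists hcov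
  · exact (hclique (t := tᶜ) (fun z w hzw => (ht z w hzw).not) x (by simp [t]))
      |>.nonempty_hom_of_forall_exists hcov

theorem IsObstructionFree.nonempty_hom_of_isCompleteColoring' [Finite W]
    (hH : H.IsObstructionFree) {c : W → ι} (hc : IsCompleteColoring' H c) :
    Nonempty ((⊤ : SimpleGraph ι) →g H) := by
  induction hn : Nat.card W using Nat.strong_induction_on generalizing W ι with
  | _ n ih =>
  rcases subsingleton_or_nontrivial ι with hι | hι
  · exact ⟨⟨fun i => (hc.1 i).choose, fun hij => (hij (Subsingleton.elim _ _)).elim⟩⟩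
  by_cases hiso : ∃ w, ∀ u, ¬H.Adj w u
  · obtain ⟨w, hw⟩ := hiso
    obtain ⟨g⟩ := ih _ (hn ▸ Finite.card_subtype_lt (x := w) (by simp)) (hH.induce _)
      (hc.induce_compl_singleton hw) rfl
    exact ⟨(Embedding.induce _).toHom.comp g⟩
  by_cases huniv : ∃ v, ∀ u, u ≠ v → H.Adj v u
  · obtain ⟨v, hv⟩ := huniv
    obtain ⟨g⟩ := ih _ (hn ▸ Finite.card_subtype_lt (x := v) (by simp)) (hH.induce _)
      (hc.induce_ne (c v)) rfl
    exact nonempty_hom_of_forall_adj hv g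
  push Not at hiso
  have := hc.1.nonempty
  obtain ⟨x, y, hxy⟩ : ∃ x y, ¬H.Reachable x y := by
    by_contra! h
    exact huniv (hH.exists_forall_adj ⟨h⟩)
  exact hH.nonempty_hom_of_not_reachable hc hiso hxy

theorem IsObstructionFree.pseudoachromaticNumber_le_bChromaticNumber [Finite V]
    {G : SimpleGraph V} (hG : G.IsObstructionFree) :
    pseudoachromaticNumber G ≤ bChromaticNumber G :=
  csSup_le' fun _ ⟨_, hc⟩ =>
    le_bChromaticNumber_of_hom (hG.nonempty_hom_of_isCompleteColoring' hc).some

end SimpleGraph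

end

/-- `G` is bψ-perfect iff `G` is Bψ-perfect. -/
theorem b_pseudoachromatic_perfect_iff_pseudoB_pseudoachromatic_perfect
    {V : Type*} [Fintype V] (G : SimpleGraph V) :
    (∀ s : Set V, bChromaticNumber (G.induce s) = pseudoachromaticNumber (G.induce s)) ↔
      (∀ s : Set V,
        pseudoBChromaticNumber (G.induce s) = pseudoachromaticNumber (G.induce s)) := by
  refine ⟨fun h s => ?_, fun h s => ?_⟩
  · exact (pseudoBChromaticNumber_le_pseudoachromaticNumber _).antisymm
      ((h s).ge.trans (bChromaticNumber_le_pseudoBChromaticNumber _))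
  · have hG := (isObstructionFree_of_forall_pseudoBChromaticNumber_eq h).induce s
    exact ((bChromaticNumber_le_pseudoBChromaticNumber _).trans
      (pseudoBChromaticNumber_le_pseudoachromaticNumber _)).antisymm
      hG.pseudoachromaticNumber_le_bChromaticNumber
end

section
/- A finite simple graph G is Bψ-perfect (for every induced subgraph H, the pseudo-b-chromatic number of H equals the pseudoachromatic number of H) if and only if G has no induced subgraph isomorphic to C4, P4, P3 ∪ K2, or 3K2. -/
open SimpleGraph

set_option synthInstance.maxHeartbeats 1000000
set_option synthInstance.maxSize 512
set_option maxHeartbeats 2000000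

section Aux

variable {V : Type*} {W : Type*} {C : Type*} {G : SimpleGraph V} {H : SimpleGraph W}

/-- Generalized complete coloring with an arbitrary color type. -/
def AuxComplete (G : SimpleGraph V) (c : V → C) : Prop :=
  Function.Surjective c ∧ ∀ i j : C, i ≠ j → ∃ u v : V, G.Adj u v ∧ c u = i ∧ c v = j

/-- Generalized dominating coloring with an arbitrary color type. -/
def AuxDominating (G : SimpleGraph V) (c : V → C) : Prop :=
  Function.Surjective c ∧
    ∀ i : C, ∃ v : V, c v = i ∧ ∀ j : C, j ≠ i → ∃ u : V, G.Adj v u ∧ c u = j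

lemma isComplete_iff_aux {k : ℕ} (c : V → Fin k) :
    IsCompleteColoring G c ↔ AuxComplete G c := Iff.rfl

lemma isDominating_iff_aux {k : ℕ} (c : V → Fin k) :
    IsDominatingColoring G c ↔ AuxDominating G c := Iff.rfl

lemma AuxDominating.complete {c : V → C} (h : AuxDominating G c) : AuxComplete G c := by
  refine ⟨h.1, fun i j hij => ?_⟩
  obtain ⟨v, hv, hdom⟩ := h.2 i
  obtain ⟨u, hadj, hu⟩ := hdom j (Ne.symm hij)
  exact ⟨v, u, hadj, hv, hu⟩

lemma hasInducedCopy_of_injective (f : W → V) (hf : Function.Injective f)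
    (h : ∀ i j : W, G.Adj (f i) (f j) ↔ H.Adj i j) : HasInducedCopy G H := by
  refine ⟨Set.range f, ⟨⟨(Equiv.ofInjective f hf).symm, fun {a b} => ?_⟩⟩⟩
  rw [← h]
  rw [Equiv.apply_ofInjective_symm hf a, Equiv.apply_ofInjective_symm hf b]
  simp [comap_adj]

lemma hasInducedCopy_induce {s : Set V} (h : HasInducedCopy (G.induce s) H) :
    HasInducedCopy G H := by
  obtain ⟨t, ⟨e⟩⟩ := h
  refine hasInducedCopy_of_injective (fun w => ((e.symm w : t) : s))
    (fun a b hab => ?_) (fun i j => ?_)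
  · exact e.symm.injective (Subtype.val_injective (Subtype.val_injective hab))
  · rw [← e.symm.map_rel_iff]
    simp [comap_adj]

end Aux
section Patterns

variable {V : Type*} {G : SimpleGraph V}

lemma pattern_C4 (hfree : ¬ HasInducedCopy G (cycleGraph 4)) {a b c d : V}
    (hab : G.Adj a b) (hbc : G.Adj b c) (hcd : G.Adj c d) (hda : G.Adj d a)
    (hac : ¬ G.Adj a c) (hbd : ¬ G.Adj b d) (hac' : a ≠ c) (hbd' : b ≠ d) : False := by
  apply hfree
  have h1 : a ≠ b := hab.ne
  have h2 : b ≠ c := hbc.ne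
  have h3 : c ≠ d := hcd.ne
  have h4 : d ≠ a := hda.ne
  have e1 := hab.symm; have e2 := hbc.symm; have e3 := hcd.symm; have e4 := hda.symm
  have n1 : ¬ G.Adj c a := fun h => hac h.symm
  have n2 : ¬ G.Adj d b := fun h => hbd h.symm
  refine hasInducedCopy_of_injective (![a,b,c,d]) ?_ ?_
  · intro i j hij
    fin_cases i <;> fin_cases j <;> simp_all
  · intro i j
    fin_cases i <;> fin_cases j <;>
      simp_all [cycleGraph_adj, Fin.ext_iff, G.irrefl] <;> decide

lemma pattern_P4 (hfree : ¬ HasInducedCopy G (pathGraph 4)) {a b c d : V}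
    (hab : G.Adj a b) (hbc : G.Adj b c) (hcd : G.Adj c d)
    (hac : ¬ G.Adj a c) (had : ¬ G.Adj a d) (hbd : ¬ G.Adj b d) : False := by
  apply hfree
  have h1 : a ≠ b := hab.ne
  have h2 : b ≠ c := hbc.ne
  have h3 : c ≠ d := hcd.ne
  have h4 : a ≠ c := by rintro rfl; exact had hcd
  have h5 : a ≠ d := by rintro rfl; exact hac hcd.symm
  have h6 : b ≠ d := by rintro rfl; exact had hab
  have e1 := hab.symm; have e2 := hbc.symm; have e3 := hcd.symm
  have n1 : ¬ G.Adj c a := fun h => hac h.symm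
  have n2 : ¬ G.Adj d a := fun h => had h.symm
  have n3 : ¬ G.Adj d b := fun h => hbd h.symm
  refine hasInducedCopy_of_injective (![a,b,c,d]) ?_ ?_
  · intro i j hij
    fin_cases i <;> fin_cases j <;> simp_all
  · intro i j
    fin_cases i <;> fin_cases j <;>
      simp_all [pathGraph_adj, G.irrefl] <;> decide

lemma pattern_P3K2 (hfree : ¬ HasInducedCopy G (pathGraph 3 ⊕g pathGraph 2)) {a b c d e : V}
    (hab : G.Adj a b) (hbc : G.Adj b c) (hac : ¬ G.Adj a c) (hac' : a ≠ c)
    (hde : G.Adj d e)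
    (had : ¬ G.Adj a d) (hae : ¬ G.Adj a e) (hbd : ¬ G.Adj b d) (hbe : ¬ G.Adj b e)
    (hcd : ¬ G.Adj c d) (hce : ¬ G.Adj c e) : False := by
  apply hfree
  have h1 : a ≠ b := hab.ne
  have h2 : b ≠ c := hbc.ne
  have h3 : d ≠ e := hde.ne
  have h4 : a ≠ d := by rintro rfl; exact hae hde
  have h5 : a ≠ e := by rintro rfl; exact had hde.symm
  have h6 : b ≠ d := by rintro rfl; exact hbe hde
  have h7 : b ≠ e := by rintro rfl; exact hbd hde.symm
  have h8 : c ≠ d := by rintro rfl; exact hce hde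
  have h9 : c ≠ e := by rintro rfl; exact hcd hde.symm
  have e1 := hab.symm; have e2 := hbc.symm; have e3 := hde.symm
  have n1 : ¬ G.Adj c a := fun h => hac h.symm
  have n2 : ¬ G.Adj d a := fun h => had h.symm
  have n3 : ¬ G.Adj e a := fun h => hae h.symm
  have n4 : ¬ G.Adj d b := fun h => hbd h.symm
  have n5 : ¬ G.Adj e b := fun h => hbe h.symm
  have n6 : ¬ G.Adj d c := fun h => hcd h.symm
  have n7 : ¬ G.Adj e c := fun h => hce h.symm
  refine hasInducedCopy_of_injective (Sum.elim (![a,b,c]) (![d,e])) ?_ ?_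
  · intro i j hij
    rcases i with i | i <;> rcases j with j | j <;> fin_cases i <;> fin_cases j <;> simp_all
  · intro i j
    rcases i with i | i <;> rcases j with j | j <;> fin_cases i <;> fin_cases j <;>
      simp_all [pathGraph_adj, G.irrefl] <;> decide

lemma pattern_3K2
    (hfree : ¬ HasInducedCopy G ((pathGraph 2 ⊕g pathGraph 2) ⊕g pathGraph 2)) {a b c d e f : V}
    (hab : G.Adj a b) (hcd : G.Adj c d) (hef : G.Adj e f)
    (hac : ¬ G.Adj a c) (had : ¬ G.Adj a d) (hae : ¬ G.Adj a e) (haf : ¬ G.Adj a f)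
    (hbc : ¬ G.Adj b c) (hbd : ¬ G.Adj b d) (hbe : ¬ G.Adj b e) (hbf : ¬ G.Adj b f)
    (hce : ¬ G.Adj c e) (hcf : ¬ G.Adj c f) (hde : ¬ G.Adj d e) (hdf : ¬ G.Adj d f) :
    False := by
  apply hfree
  have h1 : a ≠ b := hab.ne
  have h2 : c ≠ d := hcd.ne
  have h3 : e ≠ f := hef.ne
  have h4 : a ≠ c := by rintro rfl; exact had hcd
  have h5 : a ≠ d := by rintro rfl; exact hac hcd.symm
  have h6 : a ≠ e := by rintro rfl; exact haf hef
  have h7 : a ≠ f := by rintro rfl; exact hae hef.symm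
  have h8 : b ≠ c := by rintro rfl; exact hbd hcd
  have h9 : b ≠ d := by rintro rfl; exact hbc hcd.symm
  have h10 : b ≠ e := by rintro rfl; exact hbf hef
  have h11 : b ≠ f := by rintro rfl; exact hbe hef.symm
  have h12 : c ≠ e := by rintro rfl; exact hcf hef
  have h13 : c ≠ f := by rintro rfl; exact hce hef.symm
  have h14 : d ≠ e := by rintro rfl; exact hdf hef
  have h15 : d ≠ f := by rintro rfl; exact hde hef.symm
  have e1 := hab.symm; have e2 := hcd.symm; have e3 := hef.symm
  have n1 : ¬ G.Adj c a := fun h => hac h.symm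
  have n2 : ¬ G.Adj d a := fun h => had h.symm
  have n3 : ¬ G.Adj e a := fun h => hae h.symm
  have n4 : ¬ G.Adj f a := fun h => haf h.symm
  have n5 : ¬ G.Adj c b := fun h => hbc h.symm
  have n6 : ¬ G.Adj d b := fun h => hbd h.symm
  have n7 : ¬ G.Adj e b := fun h => hbe h.symm
  have n8 : ¬ G.Adj f b := fun h => hbf h.symm
  have n9 : ¬ G.Adj e c := fun h => hce h.symm
  have n10 : ¬ G.Adj f c := fun h => hcf h.symm
  have n11 : ¬ G.Adj e d := fun h => hde h.symm
  have n12 : ¬ G.Adj f d := fun h => hdf h.symm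
  refine hasInducedCopy_of_injective
    (Sum.elim (Sum.elim (![a,b]) (![c,d])) (![e,f])) ?_ ?_
  · intro i j hij
    rcases i with (i | i) | i <;> rcases j with (j | j) | j <;> fin_cases i <;> fin_cases j <;>
      simp_all
  · intro i j
    rcases i with (i | i) | i <;> rcases j with (j | j) | j <;> fin_cases i <;> fin_cases j <;>
      simp_all [pathGraph_adj, G.irrefl] <;> decide

end Patterns
section Main

variable {V : Type*} {C : Type*}

/-- The conjunction of the four forbidden-subgraph conditions. -/
def Free4 {V : Type*} (G : SimpleGraph V) : Prop :=
  ¬ HasInducedCopy G (cycleGraph 4) ∧ ¬ HasInducedCopy G (pathGraph 4) ∧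
    ¬ HasInducedCopy G (pathGraph 3 ⊕g pathGraph 2) ∧
    ¬ HasInducedCopy G ((pathGraph 2 ⊕g pathGraph 2) ⊕g pathGraph 2)

lemma Free4.induce {G : SimpleGraph V} (h : Free4 G) (s : Set V) : Free4 (G.induce s) :=
  ⟨fun hc => h.1 (hasInducedCopy_induce hc), fun hc => h.2.1 (hasInducedCopy_induce hc),
    fun hc => h.2.2.1 (hasInducedCopy_induce hc),
    fun hc => h.2.2.2 (hasInducedCopy_induce hc)⟩

lemma dom_of_clique (G : SimpleGraph V) (S : Set V)
    (hS : ∀ a ∈ S, ∀ b ∈ S, a ≠ b → G.Adj a b) (c : V → C)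
    (hmeet : ∀ i : C, ∃ v, c v = i ∧ v ∈ S) : ∃ c' : V → C, AuxDominating G c' := by
  classical
  choose g hg1 hg2 using hmeet
  have hginj : Function.Injective g := fun i j h => by rw [← hg1 i, ← hg1 j, h]
  refine ⟨fun v => if h : ∃ i, g i = v then h.choose else c v, ?_, ?_⟩ <;>
    [skip; skip] <;> skip
  all_goals {
    have hkey : ∀ i : C, (fun v => if h : ∃ i', g i' = v then h.choose else c v) (g i) = i := by
      intro i
      have h : ∃ i', g i' = g i := ⟨i, rfl⟩
      simp only [dif_pos h]
      exact hginj h.choose_spec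
    first
    | exact fun i => ⟨g i, hkey i⟩
    | { intro i
        refine ⟨g i, hkey i, fun j hj => ?_⟩
        refine ⟨g j, hS _ (hg2 i) _ (hg2 j) (fun h => hj (hginj h).symm), hkey j⟩ }
  }

end Main
lemma main_step {V : Type*} {C : Type*} : ∀ (n : ℕ), ∀ [Fintype V], True := fun _ => trivial

lemma free4_dominating_of_complete :
    ∀ (n : ℕ) {V : Type u_1} {C : Type u_2} [Fintype V] (G : SimpleGraph V),
      Fintype.card V ≤ n → Free4 G → ∀ (c : V → C), AuxComplete G c →
        ∃ c' : V → C, AuxDominating G c' := by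
  intro n
  induction n with
  | zero =>
    intro V C _ G hcard _ c hc
    have : IsEmpty V := Fintype.card_eq_zero_iff.mp (Nat.le_zero.mp hcard)
    exact ⟨c, hc.1, fun i => by obtain ⟨v, _⟩ := hc.1 i; exact isEmptyElim v⟩
  | succ n ih =>
    intro V C _ G hcard hfree c hc
    classical
    by_cases hV : IsEmpty V
    · exact ⟨c, hc.1, fun i => by obtain ⟨v, _⟩ := hc.1 i; exact isEmptyElim v⟩
    rw [not_isEmpty_iff] at hV
    by_cases hCs : ∀ i j : C, i = j
    · refine ⟨c, hc.1, fun i => ?_⟩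
      obtain ⟨v, hv⟩ := hc.1 i
      exact ⟨v, hv, fun j hj => absurd (hCs j i) hj⟩
    push_neg at hCs
    obtain ⟨i1, j1, hij1⟩ := hCs
    have hpair : ∀ i : C, ∃ j : C, j ≠ i := by
      intro i
      by_cases h : i = i1
      · exact ⟨j1, by rw [h]; exact fun hh => hij1 hh.symm⟩
      · exact ⟨i1, fun hh => h (hh ▸ rfl)⟩
    by_cases hiso : ∃ w : V, ∀ x : V, ¬ G.Adj w x
    · -- there is an isolated vertex; remove it
      obtain ⟨w, hw⟩ := hiso
      set s : Set V := {x | x ≠ w} with hs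
      have hcards : Fintype.card ↥s < Fintype.card V := by
        refine Fintype.card_lt_of_injective_of_notMem (Subtype.val) Subtype.val_injective
          (b := w) ?_
        rintro ⟨⟨x, hx⟩, hxx⟩
        exact hx hxx
      have hfree' := hfree.induce s
      have hc₀ : AuxComplete (G.induce s) (fun v => c v.val) := by
        constructor
        · intro i
          obtain ⟨j, hj⟩ := hpair i
          obtain ⟨a, b, hab, ha, hb⟩ := hc.2 i j (Ne.symm hj)
          have haw : a ≠ w := by rintro rfl; exact hw b hab
          exact ⟨⟨a, haw⟩, ha⟩
        · intro i j hij
          obtain ⟨a, b, hab, ha, hb⟩ := hc.2 i j hij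
          have haw : a ≠ w := by rintro rfl; exact hw b hab
          have hbw : b ≠ w := by rintro rfl; exact hw a hab.symm
          exact ⟨⟨a, haw⟩, ⟨b, hbw⟩, by simpa using hab, ha, hb⟩
      obtain ⟨c₁, hc₁⟩ := ih (G.induce s) (by omega) hfree' _ hc₀
      refine ⟨fun v => if h : v = w then c w else c₁ ⟨v, h⟩, ?_, ?_⟩
      · intro i
        obtain ⟨⟨v, hv⟩, h⟩ := hc₁.1 i
        exact ⟨v, by dsimp only; rw [dif_neg hv]; exact h⟩
      · intro i
        obtain ⟨⟨v, hv⟩, hvi, hdom⟩ := hc₁.2 i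
        refine ⟨v, by dsimp only; rw [dif_neg hv]; exact hvi, fun j hj => ?_⟩
        obtain ⟨⟨x, hx⟩, hadj, hxj⟩ := hdom j hj
        exact ⟨x, by simpa using hadj, by dsimp only; rw [dif_neg hx]; exact hxj⟩
    by_cases huniv : ∃ u : V, ∀ x : V, x ≠ u → G.Adj u x
    · -- there is a universal vertex; remove it
      obtain ⟨u, hu⟩ := huniv
      obtain ⟨j0, hj0⟩ := hpair (c u)
      set i0 := c u with hi0
      set s : Set V := {x | x ≠ u} with hs
      have hcards : Fintype.card ↥s < Fintype.card V := by
        refine Fintype.card_lt_of_injective_of_notMem (Subtype.val) Subtype.val_injective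
          (b := u) ?_
        rintro ⟨⟨x, hx⟩, hxx⟩
        exact hx hxx
      have hfree' := hfree.induce s
      have hc₀ : AuxComplete (G.induce s)
          (fun v : ↥s => if h : c v.val = i0 then (⟨j0, hj0⟩ : {j : C // j ≠ i0})
            else ⟨c v.val, h⟩) := by
        constructor
        · rintro ⟨j, hj⟩
          obtain ⟨a, ha⟩ := hc.1 j
          have hau : a ≠ u := by rintro rfl; exact hj (hi0.trans ha).symm
          exact ⟨⟨a, hau⟩, by dsimp only; simp only [ha]; rw [dif_neg hj]⟩
        · rintro ⟨j, hj⟩ ⟨l, hl⟩ hne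
          have hjl : j ≠ l := fun h => hne (by simpa using h)
          obtain ⟨a, b, hab, ha, hb⟩ := hc.2 j l hjl
          have hau : a ≠ u := by rintro rfl; exact hj (hi0.trans ha).symm
          have hbu : b ≠ u := by rintro rfl; exact hl (hi0.trans hb).symm
          refine ⟨⟨a, hau⟩, ⟨b, hbu⟩, by simpa using hab, ?_, ?_⟩
          · dsimp only; simp only [ha]; rw [dif_neg hj]
          · dsimp only; simp only [hb]; rw [dif_neg hl]
      obtain ⟨c₁, hc₁⟩ := ih (G.induce s) (by omega) hfree' _ hc₀
      refine ⟨fun v => if h : v = u then i0 else (c₁ ⟨v, h⟩).val, ?_, ?_⟩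
      · intro i
        by_cases hi : i = i0
        · exact ⟨u, by dsimp only; rw [dif_pos rfl, hi]⟩
        · obtain ⟨⟨v, hv⟩, h⟩ := hc₁.1 ⟨i, hi⟩
          exact ⟨v, by dsimp only; rw [dif_neg hv, h]⟩
      · intro i
        by_cases hi : i = i0
        · subst hi
          refine ⟨u, by dsimp only; rw [dif_pos rfl], fun j hj => ?_⟩
          obtain ⟨⟨x, hx⟩, hxj⟩ := hc₁.1 ⟨j, hj⟩
          exact ⟨x, hu x hx, by dsimp only; rw [dif_neg hx, hxj]⟩
        · obtain ⟨⟨v, hv⟩, hvi, hdom⟩ := hc₁.2 ⟨i, hi⟩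
          refine ⟨v, by dsimp only; rw [dif_neg hv, hvi], fun j hj => ?_⟩
          by_cases hji : j = i0
          · exact ⟨u, (hu v hv).symm, by dsimp only; rw [dif_pos rfl, hji]⟩
          · have hne : (⟨j, hji⟩ : {j : C // j ≠ i0}) ≠ ⟨i, hi⟩ := fun h => hj (by simpa using h)
            obtain ⟨⟨x, hx⟩, hadj, hxj⟩ := hdom ⟨j, hji⟩ hne
            exact ⟨x, by simpa using hadj, by dsimp only; rw [dif_neg hx, hxj]⟩
    -- no isolated vertex, no universal vertex
    push_neg at hiso huniv
    obtain ⟨u, -, hmax⟩ := Finset.exists_max_image Finset.univ (fun v => G.degree v)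
      ⟨hV.some, Finset.mem_univ _⟩
    have hclaim1 : ∀ x, ¬ G.Adj u x → x ≠ u → ∀ y, G.Adj u y → ¬ G.Adj x y := by
      intro x hux hxu y huy hxy
      have hyz : ∀ z, G.Adj u z → z ≠ y → G.Adj y z := by
        intro z huz hzy
        by_contra hyz
        by_cases hxz : G.Adj x z
        · exact pattern_C4 hfree.1 huy hxy.symm hxz huz.symm hux hyz
            (Ne.symm hxu) (Ne.symm hzy)
        · exact pattern_P4 hfree.2.1 huz.symm huy hxy.symm (fun h => hyz h.symm)
            (fun h => hxz h.symm) hux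
      have hsub : insert u (insert x ((G.neighborFinset u).erase y)) ⊆ G.neighborFinset y := by
        intro z hz
        rw [Finset.mem_insert, Finset.mem_insert] at hz
        rw [mem_neighborFinset]
        rcases hz with rfl | rfl | hz
        · exact huy.symm
        · exact hxy.symm
        · rw [Finset.mem_erase, mem_neighborFinset] at hz
          exact hyz z hz.2 hz.1
      have hx_not : x ∉ insert x ((G.neighborFinset u).erase y) → False := by
        intro h; exact h (Finset.mem_insert_self _ _)
      have hcard1 : (insert u (insert x ((G.neighborFinset u).erase y))).card
          = G.degree u + 1 := by
        rw [Finset.card_insert_of_notMem, Finset.card_insert_of_notMem,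
          Finset.card_erase_of_mem (by rwa [mem_neighborFinset])]
        · have hpos : 0 < G.degree u := by
            rw [← card_neighborFinset_eq_degree]
            exact Finset.card_pos.mpr ⟨y, by rwa [mem_neighborFinset]⟩
          rw [← card_neighborFinset_eq_degree] at hpos ⊢
          omega
        · intro h
          exact hux (by rw [Finset.mem_erase, mem_neighborFinset] at h; exact h.2)
        · intro h
          rw [Finset.mem_insert, Finset.mem_erase, mem_neighborFinset] at h
          rcases h with rfl | h
          · exact hxu rfl
          · exact (G.irrefl h.2)
      have hle : G.degree u + 1 ≤ G.degree y := by
        rw [← hcard1, ← card_neighborFinset_eq_degree]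
        exact Finset.card_le_card hsub
      have h2 : G.degree y ≤ G.degree u := hmax y (Finset.mem_univ y)
      omega
    set X : Set V := {v | v = u ∨ G.Adj u v} with hX
    have hcross : ∀ x, x ∉ X → ∀ w, w ∈ X → ¬ G.Adj x w := by
      intro x hx w hw hadj
      have hx' : ¬ (x = u ∨ G.Adj u x) := hx
      push_neg at hx'
      rcases hw with rfl | hw
      · exact hx'.2 hadj.symm
      · exact hclaim1 x hx'.2 hx'.1 w hw hadj
    obtain ⟨x0, hx0u, hx0a⟩ := huniv u
    have hx0X : x0 ∉ X := by
      rintro (rfl | h)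
      · exact hx0u rfl
      · exact hx0a h
    obtain ⟨x1, hx1⟩ := hiso x0
    have hx1X : x1 ∉ X := fun h => hcross x0 hx0X x1 h hx1
    obtain ⟨v1, hv1⟩ := hiso u
    have hv1X : v1 ∈ X := Or.inr hv1
    have huX : u ∈ X := Or.inl rfl
    have hXclique : ∀ a ∈ X, ∀ b ∈ X, a ≠ b → G.Adj a b := by
      intro a ha b hb hab
      rcases ha with rfl | ha
      · rcases hb with rfl | hb
        · exact absurd rfl hab
        · exact hb
      · rcases hb with rfl | hb
        · exact ha.symm
        · by_contra hnadj
          exact pattern_P3K2 hfree.2.2.1 ha.symm hb hnadj hab hx1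
            (fun h => hcross x0 hx0X a (Or.inr ha) h.symm)
            (fun h => hcross x1 hx1X a (Or.inr ha) h.symm)
            (fun h => hcross x0 hx0X u huX h.symm)
            (fun h => hcross x1 hx1X u huX h.symm)
            (fun h => hcross x0 hx0X b (Or.inr hb) h.symm)
            (fun h => hcross x1 hx1X b (Or.inr hb) h.symm)
    have hYclique : ∀ a, a ∉ X → ∀ b, b ∉ X → a ≠ b → G.Adj a b := by
      intro a ha b hb hab
      by_contra hnadj
      obtain ⟨a', ha'⟩ := hiso a
      have ha'X : a' ∉ X := fun h => hcross a ha a' h ha'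
      obtain ⟨b', hb'⟩ := hiso b
      have hb'X : b' ∉ X := fun h => hcross b hb b' h hb'
      have hcu : ∀ z, z ∉ X → ¬ G.Adj z u := fun z hz h => hcross z hz u huX h
      have hcv : ∀ z, z ∉ X → ¬ G.Adj z v1 := fun z hz h => hcross z hz v1 hv1X h
      have hab' : ¬ G.Adj a' b := by
        intro h
        exact pattern_P3K2 hfree.2.2.1 ha' h hnadj hab hv1
          (hcu a ha) (hcv a ha) (hcu a' ha'X) (hcv a' ha'X) (hcu b hb) (hcv b hb)
      have hba' : ¬ G.Adj b' a := by
        intro h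
        exact pattern_P3K2 hfree.2.2.1 hb' h (fun hh => hnadj hh.symm) (Ne.symm hab) hv1
          (hcu b hb) (hcv b hb) (hcu b' hb'X) (hcv b' hb'X) (hcu a ha) (hcv a ha)
      have hnadj2 : ¬ G.Adj a b' := fun h => hba' h.symm
      have hab2 : a ≠ b' := by rintro rfl; exact hnadj hb'.symm
      have ha'b' : ¬ G.Adj a' b' := by
        intro h
        exact pattern_P3K2 hfree.2.2.1 ha' h hnadj2 hab2 hv1
          (hcu a ha) (hcv a ha) (hcu a' ha'X) (hcv a' ha'X) (hcu b' hb'X) (hcv b' hb'X)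
      exact pattern_3K2 hfree.2.2.2 ha' hb' hv1
        hnadj hnadj2 (hcu a ha) (hcv a ha)
        hab' ha'b' (hcu a' ha'X) (hcv a' ha'X)
        (hcu b hb) (hcv b hb) (hcu b' hb'X) (hcv b' hb'X)
    by_cases hmeetX : ∀ i : C, ∃ v, c v = i ∧ v ∈ X
    · exact dom_of_clique G X (fun a ha b hb => hXclique a ha b hb) c hmeetX
    · push_neg at hmeetX
      obtain ⟨i, hi⟩ := hmeetX
      have hmeetY : ∀ j : C, ∃ v, c v = j ∧ v ∈ {v | v ∉ X} := by
        intro j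
        by_contra hj
        push_neg at hj
        have hij : i ≠ j := by
          rintro rfl
          obtain ⟨v, hv⟩ := hc.1 i
          exact (hj v hv) (hi v hv)
        obtain ⟨a, b, hab, ha, hb⟩ := hc.2 i j hij
        exact hcross a (hi a ha) b (not_not.mp (fun hh => (hj b hb) hh)) hab
      exact dom_of_clique G {v | v ∉ X} (fun a ha b hb => hYclique a ha b hb) c hmeetY
section Facts

instance {n : ℕ} : DecidableRel (pathGraph n).Adj :=
  fun _ _ => decidable_of_iff' _ pathGraph_adj

instance {α β : Type*} {G : SimpleGraph α} {H : SimpleGraph β} [DecidableRel G.Adj]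
    [DecidableRel H.Adj] : DecidableRel (G ⊕g H).Adj := fun u v =>
  match u, v with
  | Sum.inl u, Sum.inl v => decidable_of_iff (G.Adj u v) (by simp)
  | Sum.inl _, Sum.inr _ => .isFalse (by simp)
  | Sum.inr _, Sum.inl _ => .isFalse (by simp)
  | Sum.inr u, Sum.inr v => decidable_of_iff (H.Adj u v) (by simp)

instance {V : Type*} [Fintype V] [DecidableEq V] (G : SimpleGraph V) [DecidableRel G.Adj]
    {k : ℕ} (c : V → Fin k) : Decidable (IsCompleteColoring G c) := by
  unfold IsCompleteColoring; infer_instance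

instance {V : Type*} [Fintype V] [DecidableEq V] (G : SimpleGraph V) [DecidableRel G.Adj]
    {k : ℕ} (c : V → Fin k) : Decidable (IsDominatingColoring G c) := by
  unfold IsDominatingColoring; infer_instance

/-- `v` has two distinct neighbours. -/
def TwoNbrs {V : Type*} (G : SimpleGraph V) (v : V) : Prop :=
  ∃ a b : V, a ≠ b ∧ G.Adj v a ∧ G.Adj v b

/-- `v` has three distinct neighbours. -/
def ThreeNbrs {V : Type*} (G : SimpleGraph V) (v : V) : Prop :=
  ∃ a b d : V, a ≠ b ∧ a ≠ d ∧ b ≠ d ∧ G.Adj v a ∧ G.Adj v b ∧ G.Adj v d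

instance {V : Type*} [Fintype V] [DecidableEq V] (G : SimpleGraph V) [DecidableRel G.Adj]
    (v : V) : Decidable (TwoNbrs G v) := by unfold TwoNbrs; infer_instance

instance {V : Type*} [Fintype V] [DecidableEq V] (G : SimpleGraph V) [DecidableRel G.Adj]
    (v : V) : Decidable (ThreeNbrs G v) := by unfold ThreeNbrs; infer_instance

lemma dom_two_nbrs {V : Type*} {k : ℕ} (G : SimpleGraph V) (c : V → Fin k)
    (h : IsDominatingColoring G c) (hk : 3 ≤ k) :
    ∃ v0 v1 v2 : V, v0 ≠ v1 ∧ v0 ≠ v2 ∧ v1 ≠ v2 ∧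
      TwoNbrs G v0 ∧ TwoNbrs G v1 ∧ TwoNbrs G v2 := by
  have h0 : (0 : ℕ) < k := by omega
  have h1 : (1 : ℕ) < k := by omega
  have h2 : (2 : ℕ) < k := by omega
  have htwo : ∀ i : Fin k, ∃ ja jb : Fin k, ja ≠ i ∧ jb ≠ i ∧ ja ≠ jb := by
    intro i
    by_cases ha : i.val = 0
    · exact ⟨⟨1, h1⟩, ⟨2, h2⟩, by simp [Fin.ext_iff]; omega, by simp [Fin.ext_iff]; omega,
        by simp [Fin.ext_iff]⟩
    · by_cases hb : i.val = 1
      · exact ⟨⟨0, h0⟩, ⟨2, h2⟩, by simp [Fin.ext_iff]; omega, by simp [Fin.ext_iff]; omega,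
          by simp [Fin.ext_iff]⟩
      · exact ⟨⟨0, h0⟩, ⟨1, h1⟩, by simp [Fin.ext_iff]; omega, by simp [Fin.ext_iff]; omega,
          by simp [Fin.ext_iff]⟩
  have tw : ∀ i : Fin k, ∃ v, c v = i ∧ TwoNbrs G v := by
    intro i
    obtain ⟨v, hv, hd⟩ := h.2 i
    obtain ⟨ja, jb, hja, hjb, hab⟩ := htwo i
    obtain ⟨a, haa, hca⟩ := hd ja hja
    obtain ⟨b, hbb, hcb⟩ := hd jb hjb
    exact ⟨v, hv, a, b, fun he => hab (by rw [← hca, ← hcb, he]), haa, hbb⟩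
  obtain ⟨v0, hv0, t0⟩ := tw ⟨0, h0⟩
  obtain ⟨v1, hv1, t1⟩ := tw ⟨1, h1⟩
  obtain ⟨v2, hv2, t2⟩ := tw ⟨2, h2⟩
  refine ⟨v0, v1, v2, ?_, ?_, ?_, t0, t1, t2⟩
  · intro he; rw [he, hv1] at hv0; simp [Fin.ext_iff] at hv0
  · intro he; rw [he, hv2] at hv0; simp [Fin.ext_iff] at hv0
  · intro he; rw [he, hv2] at hv1; simp [Fin.ext_iff] at hv1

lemma dom_three_nbrs {V : Type*} {k : ℕ} (G : SimpleGraph V) (c : V → Fin k)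
    (h : IsDominatingColoring G c) (hk : 4 ≤ k) : ∃ v : V, ThreeNbrs G v := by
  have h0 : (0 : ℕ) < k := by omega
  have h1 : (1 : ℕ) < k := by omega
  have h2 : (2 : ℕ) < k := by omega
  have h3 : (3 : ℕ) < k := by omega
  obtain ⟨v, hv, hd⟩ := h.2 ⟨0, h0⟩
  obtain ⟨a, haa, hca⟩ := hd ⟨1, h1⟩ (by simp [Fin.ext_iff])
  obtain ⟨b, hbb, hcb⟩ := hd ⟨2, h2⟩ (by simp [Fin.ext_iff])
  obtain ⟨d, hdd, hcd⟩ := hd ⟨3, h3⟩ (by simp [Fin.ext_iff])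
  refine ⟨v, a, b, d, ?_, ?_, ?_, haa, hbb, hdd⟩
  · intro he; rw [he, hcb] at hca; simp [Fin.ext_iff] at hca
  · intro he; rw [he, hcd] at hca; simp [Fin.ext_iff] at hca
  · intro he; rw [he, hcd] at hcb; simp [Fin.ext_iff] at hcb

lemma dom_le_two_C4 {k : ℕ} (c : Fin 4 → Fin k)
    (h : IsDominatingColoring (cycleGraph 4) c) : k ≤ 2 := by
  by_contra hk
  push_neg at hk
  rcases Nat.lt_or_ge k 4 with h4 | h4
  · have hk3 : k = 3 := by omega
    subst hk3
    exact absurd ⟨c, h⟩ (by decide : ¬ ∃ c : Fin 4 → Fin 3,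
      IsDominatingColoring (cycleGraph 4) c)
  · exact absurd (dom_three_nbrs _ c h h4)
      (by decide : ¬ ∃ v : Fin 4, ThreeNbrs (cycleGraph 4) v)

lemma dom_le_two_P4 {k : ℕ} (c : Fin 4 → Fin k)
    (h : IsDominatingColoring (pathGraph 4) c) : k ≤ 2 := by
  by_contra hk
  push_neg at hk
  exact absurd (dom_two_nbrs _ c h (by omega))
    (by decide : ¬ ∃ v0 v1 v2 : Fin 4, v0 ≠ v1 ∧ v0 ≠ v2 ∧ v1 ≠ v2 ∧
      TwoNbrs (pathGraph 4) v0 ∧ TwoNbrs (pathGraph 4) v1 ∧ TwoNbrs (pathGraph 4) v2)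

lemma dom_le_two_P3K2 {k : ℕ} (c : Fin 3 ⊕ Fin 2 → Fin k)
    (h : IsDominatingColoring (pathGraph 3 ⊕g pathGraph 2) c) : k ≤ 2 := by
  by_contra hk
  push_neg at hk
  exact absurd (dom_two_nbrs _ c h (by omega))
    (by decide : ¬ ∃ v0 v1 v2 : Fin 3 ⊕ Fin 2, v0 ≠ v1 ∧ v0 ≠ v2 ∧ v1 ≠ v2 ∧
      TwoNbrs (pathGraph 3 ⊕g pathGraph 2) v0 ∧ TwoNbrs (pathGraph 3 ⊕g pathGraph 2) v1 ∧
      TwoNbrs (pathGraph 3 ⊕g pathGraph 2) v2)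

lemma dom_le_two_3K2 {k : ℕ} (c : (Fin 2 ⊕ Fin 2) ⊕ Fin 2 → Fin k)
    (h : IsDominatingColoring ((pathGraph 2 ⊕g pathGraph 2) ⊕g pathGraph 2) c) : k ≤ 2 := by
  by_contra hk
  push_neg at hk
  obtain ⟨v0, -, -, -, -, -, t0, -, -⟩ := dom_two_nbrs _ c h (by omega)
  exact absurd t0 ((by decide : ∀ v : (Fin 2 ⊕ Fin 2) ⊕ Fin 2,
    ¬ TwoNbrs ((pathGraph 2 ⊕g pathGraph 2) ⊕g pathGraph 2) v) v0)

lemma complete_three_C4 :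
    IsCompleteColoring (cycleGraph 4) (![0,1,2,0] : Fin 4 → Fin 3) := by decide

lemma complete_three_P4 :
    IsCompleteColoring (pathGraph 4) (![0,1,2,0] : Fin 4 → Fin 3) := by decide

lemma complete_three_P3K2 :
    IsCompleteColoring (pathGraph 3 ⊕g pathGraph 2)
      (Sum.elim (![1,0,2] : Fin 3 → Fin 3) (![1,2] : Fin 2 → Fin 3)) := by decide

lemma complete_three_3K2 :
    IsCompleteColoring ((pathGraph 2 ⊕g pathGraph 2) ⊕g pathGraph 2)
      (Sum.elim (Sum.elim (![0,1] : Fin 2 → Fin 3) (![0,2] : Fin 2 → Fin 3))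
        (![1,2] : Fin 2 → Fin 3)) := by decide

end Facts

section Transport

variable {V : Type*} {W : Type*} {C : Type*} {G : SimpleGraph V} {H : SimpleGraph W}

lemma aux_complete_comp (e : G ≃g H) {c : W → C} (h : AuxComplete H c) :
    AuxComplete G (c ∘ e) := by
  constructor
  · intro i
    obtain ⟨w, hw⟩ := h.1 i
    exact ⟨e.symm w, by simp [hw]⟩
  · intro i j hij
    obtain ⟨a, b, hadj, ha, hb⟩ := h.2 i j hij
    refine ⟨e.symm a, e.symm b, ?_, by simp [ha], by simp [hb]⟩
    have := e.symm.map_rel_iff (a := a) (b := b)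
    exact this.mpr hadj

lemma aux_dominating_comp (e : G ≃g H) {c : W → C} (h : AuxDominating H c) :
    AuxDominating G (c ∘ e) := by
  constructor
  · intro i
    obtain ⟨w, hw⟩ := h.1 i
    exact ⟨e.symm w, by simp [hw]⟩
  · intro i
    obtain ⟨v, hv, hdom⟩ := h.2 i
    refine ⟨e.symm v, by simp [hv], fun j hj => ?_⟩
    obtain ⟨x, hadj, hx⟩ := hdom j hj
    refine ⟨e.symm x, ?_, by simp [hx]⟩
    have := e.symm.map_rel_iff (a := v) (b := x)
    exact this.mpr hadj

end Transport


/-- `G` is Bψ-perfect iff `G` has no induced subgraph isomorphic to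
`C₄`, `P₄`, `P₃ ∪ K₂`, or `3K₂`. -/
theorem pseudoB_pseudoachromatic_perfect_iff_free {V : Type*} [Fintype V] (G : SimpleGraph V) :
    (∀ s : Set V, pseudoBChromaticNumber (G.induce s) = pseudoachromaticNumber (G.induce s)) ↔
      (¬ HasInducedCopy G (cycleGraph 4) ∧ ¬ HasInducedCopy G (pathGraph 4) ∧
        ¬ HasInducedCopy G (pathGraph 3 ⊕g pathGraph 2) ∧
        ¬ HasInducedCopy G ((pathGraph 2 ⊕g pathGraph 2) ⊕g pathGraph 2)) := by
  constructor
  · intro h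
    have key : ∀ {W : Type} (H : SimpleGraph W) (c3 : W → Fin 3), AuxComplete H c3 →
        (∀ k (c : W → Fin k), IsDominatingColoring H c → k ≤ 2) →
        ¬ HasInducedCopy G H := by
      rintro W H c3 hc3 hdom ⟨s, ⟨e⟩⟩
      haveI : Fintype ↥s := Fintype.ofFinite _
      have h3 : 3 ≤ pseudoachromaticNumber (G.induce s) := by
        apply le_csSup
        · refine ⟨Fintype.card ↥s, fun k hk => ?_⟩
          obtain ⟨c, hc⟩ := hk
          simpa using Fintype.card_le_of_surjective c hc.1
        · exact ⟨c3 ∘ e, aux_complete_comp e hc3⟩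
      have h2 : pseudoBChromaticNumber (G.induce s) ≤ 2 := by
        apply csSup_le'
        rintro k ⟨c, hc⟩
        exact hdom k (c ∘ e.symm) (aux_dominating_comp e.symm hc)
      rw [h s] at h2
      omega
    refine ⟨?_, ?_, ?_, ?_⟩
    · exact key _ _ complete_three_C4 (fun k c hc => dom_le_two_C4 c hc)
    · exact key _ _ complete_three_P4 (fun k c hc => dom_le_two_P4 c hc)
    · exact key _ _ complete_three_P3K2 (fun k c hc => dom_le_two_P3K2 c hc)
    · exact key _ _ complete_three_3K2 (fun k c hc => dom_le_two_3K2 c hc)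
  · rintro ⟨h1, h2, h3, h4⟩ s
    haveI : Fintype ↥s := Fintype.ofFinite _
    have hfree : Free4 (G.induce s) := Free4.induce ⟨h1, h2, h3, h4⟩ s
    have hset : {k | ∃ c : ↥s → Fin k, IsDominatingColoring (G.induce s) c}
        = {k | ∃ c : ↥s → Fin k, IsCompleteColoring (G.induce s) c} := by
      ext k
      constructor
      · rintro ⟨c, hc⟩
        exact ⟨c, (AuxDominating.complete hc : AuxComplete _ c)⟩
      · rintro ⟨c, hc⟩
        exact free4_dominating_of_complete (Fintype.card ↥s) (G.induce s) le_rfl hfree c hc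
    unfold pseudoBChromaticNumber pseudoachromaticNumber
    rw [hset]
end

section
/- Every Γh-perfect graph is perfect; that is, if for every induced subgraph H of G the Grundy number of H equals the Hadwiger number of H, then for every induced subgraph H of G the chromatic number of H equals the clique number of H. -/
open SimpleGraph

/-!
An induced path `P₄` has Grundy number 3 (colour its vertices 1, 3, 2, 1) but Hadwiger number 2
(each branch set of a `K₃` minor would have to contain one of the two inner vertices), so a
Γh-perfect graph has no induced `P₄`. In a `P₄`-free graph a Grundy colouring certifies a clique
as large as any of its colours: if every vertex of a clique sees colour `j`, a vertex of colour `j`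
with the most neighbours in the clique sees all of it, since a clique vertex it misses would see
another vertex of colour `j`, and the two would span an induced `P₄`. A Grundy colouring exists
(minimise the colour sum), so `χ ≤ ω`.
-/

section Colorings

variable {V V' : Type*} {G : SimpleGraph V} {G' : SimpleGraph V'} {k : ℕ}

lemma IsProperColoring.comp_hom {c : V' → Fin k} (hc : IsProperColoring G' c) (f : G →g G') :
    IsProperColoring G (c ∘ f) :=
  fun _ _ h => hc _ _ (f.map_adj h)

lemma IsPseudoGrundyColoring.comp_iso {c : V' → Fin k} (hc : IsPseudoGrundyColoring G' c)
    (e : G ≃g G') : IsPseudoGrundyColoring G (c ∘ e) := by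
  refine ⟨hc.1.comp e.surjective, fun v j hj => ?_⟩
  obtain ⟨u, hvu, rfl⟩ := hc.2 (e v) j hj
  exact ⟨e.symm u, e.map_adj_iff.1 (by rwa [e.apply_symm_apply]), by simp⟩

theorem SimpleGraph.Iso.grundyNumber_eq (e : G ≃g G') : grundyNumber G = grundyNumber G' := by
  unfold grundyNumber
  congr 1
  ext k
  exact ⟨fun ⟨c, hp, hg⟩ =>
      ⟨c ∘ e.symm, hp.comp_hom e.symm.toEmbedding.toHom, hg.comp_iso e.symm⟩,
    fun ⟨c, hp, hg⟩ => ⟨c ∘ e, hp.comp_hom e.toEmbedding.toHom, hg.comp_iso e⟩⟩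

lemma le_grundyNumber [Finite V] {c : V → Fin k} (hp : IsProperColoring G c)
    (hg : IsPseudoGrundyColoring G c) : k ≤ grundyNumber G := by
  refine le_csSup ⟨Nat.card V, ?_⟩ ⟨c, hp, hg⟩
  rintro n ⟨c', -, hsurj, -⟩
  simpa using Nat.card_le_card_of_surjective c' hsurj

end Colorings

section Minors

variable {V V' : Type*} {G : SimpleGraph V} {G' : SimpleGraph V'}

lemma HasCompleteMinor.mono {k l : ℕ} (hkl : k ≤ l) (h : HasCompleteMinor G l) :
    HasCompleteMinor G k := by
  obtain ⟨B, hconn, hdisj, hadj⟩ := h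
  refine ⟨B ∘ Fin.castLE hkl, fun i => hconn _, fun i j hij => hdisj _ _ ?_,
    fun i j hij => hadj _ _ ?_⟩ <;>
  exact (Fin.castLE_injective hkl).ne hij

lemma HasCompleteMinor.map {k : ℕ} (f : G →g G') (hf : Function.Injective f)
    (h : HasCompleteMinor G k) : HasCompleteMinor G' k := by
  obtain ⟨B, hconn, hdisj, hadj⟩ := h
  refine ⟨fun i => f '' B i, fun i => ?_, fun i j hij => ?_, fun i j hij => ?_⟩
  · exact (hconn i).map (induceHom f (Set.mapsTo_image f (B i)))
      (Set.surjective_mapsTo_image_restrict f (B i))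
  · exact (Set.disjoint_image_iff hf).2 (hdisj i j hij)
  · obtain ⟨u, hu, v, hv, huv⟩ := hadj i j hij
    exact ⟨f u, Set.mem_image_of_mem f hu, f v, Set.mem_image_of_mem f hv, f.map_adj huv⟩

theorem SimpleGraph.Iso.hadwigerNumber_eq (e : G ≃g G') :
    hadwigerNumber G = hadwigerNumber G' := by
  unfold hadwigerNumber
  congr 1
  ext k
  exact ⟨.map e.toEmbedding.toHom e.injective, .map e.symm.toEmbedding.toHom e.symm.injective⟩

lemma exists_adj_of_connected_induce {s : Set V} (hs : (G.induce s).Connected) {a b : V}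
    (ha : a ∈ s) (hb : b ∈ s) (hab : a ≠ b) : ∃ c ∈ s, G.Adj a c := by
  have : Nontrivial s := ⟨⟨a, ha⟩, ⟨b, hb⟩, by simpa using hab⟩
  obtain ⟨c, hc⟩ := hs.preconnected.exists_adj_of_nontrivial ⟨a, ha⟩
  exact ⟨c, c.2, hc⟩

end Minors

section PathGraph

theorem three_le_grundyNumber_pathGraph_four : 3 ≤ grundyNumber (pathGraph 4) :=
  le_grundyNumber (c := ![0, 2, 1, 0])
    (by unfold IsProperColoring; simp only [pathGraph_adj]; decide)
    (by unfold IsPseudoGrundyColoring; simp only [pathGraph_adj]; decide)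

theorem not_hasCompleteMinor_pathGraph_four_three : ¬ HasCompleteMinor (pathGraph 4) 3 := by
  rintro ⟨B, hconn, hdisj, hadj⟩
  have hsep : ∀ i j, i ≠ j → ∀ a, a ∈ B i → a ∈ B j → False :=
    fun i j hij a hi hj => Set.disjoint_left.1 (hdisj i j hij) hi hj
  have hothers : ∀ i : Fin 3, ∃ j l, i ≠ j ∧ i ≠ l ∧ j ≠ l := by decide
  -- A branch set avoiding the inner vertices 1 and 2 is a single leaf, which is adjacent
  -- to only one vertex and hence to only one other branch set.
  have hinner : ∀ i, 1 ∈ B i ∨ 2 ∈ B i := by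
    intro i
    by_contra! hi
    have hleaf : ∀ a ∈ B i, a ≠ 1 ∧ a ≠ 2 := fun a ha => ⟨by rintro rfl; exact hi.1 ha,
      by rintro rfl; exact hi.2 ha⟩
    obtain ⟨j, l, hij, hil, hjl⟩ := hothers i
    obtain ⟨u, hu, v, hv, huv⟩ := hadj i j hij
    obtain ⟨u', hu', v', hv', huv'⟩ := hadj i l hil
    have hleaf_adj : ∀ a b : Fin 4, a ≠ 1 → a ≠ 2 → (pathGraph 4).Adj a b → b = 1 ∨ b = 2 := by
      simp only [pathGraph_adj]; decide
    have hleaf_unique : ∀ a b b' : Fin 4, a ≠ 1 → a ≠ 2 → (pathGraph 4).Adj a b →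
        (pathGraph 4).Adj a b' → b = b' := by
      simp only [pathGraph_adj]; decide
    obtain rfl : u = u' := by
      by_contra hne
      obtain ⟨c, hc, huc⟩ := exists_adj_of_connected_induce (hconn i) hu hu' hne
      have := hleaf c hc
      rcases hleaf_adj u c (hleaf u hu).1 (hleaf u hu).2 huc with rfl | rfl <;> simp_all
    obtain rfl := hleaf_unique u v v' (hleaf u hu).1 (hleaf u hu).2 huv huv'
    exact hsep j l hjl v hv hv'
  rcases hinner 0 with h0 | h0 <;> rcases hinner 1 with h1 | h1 <;>
    rcases hinner 2 with h2 | h2 <;>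
    first
    | exact hsep 0 1 (by decide) _ h0 h1
    | exact hsep 0 2 (by decide) _ h0 h2
    | exact hsep 1 2 (by decide) _ h1 h2

theorem hadwigerNumber_pathGraph_four_le_two : hadwigerNumber (pathGraph 4) ≤ 2 :=
  csSup_le' fun k hk => by
    by_contra! hk3
    exact not_hasCompleteMinor_pathGraph_four_three (HasCompleteMinor.mono hk3 hk)

theorem pathGraph_four_isIndContained_of_adj {V : Type*} {G : SimpleGraph V} {a b c d : V}
    (hab : G.Adj a b) (hbc : G.Adj b c) (hcd : G.Adj c d) (hac : ¬ G.Adj a c)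
    (had : ¬ G.Adj a d) (hbd : ¬ G.Adj b d) : pathGraph 4 ⊴ G := by
  have hadj : ∀ i j, G.Adj (![a, b, c, d] i) (![a, b, c, d] j) ↔ (pathGraph 4).Adj i j := by
    intro i j
    fin_cases i <;> fin_cases j <;>
      simp [pathGraph_adj, hab, hbc, hcd, hab.symm, hbc.symm, hcd.symm, hac, had, hbd,
        G.adj_comm c a, G.adj_comm d a, G.adj_comm d b]
  have hdistinct :
      ∀ i j : Fin 4, (∀ l, (pathGraph 4).Adj i l ↔ (pathGraph 4).Adj j l) → i = j := by
    simp only [pathGraph_adj]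
    decide
  have hinj : Function.Injective ![a, b, c, d] := fun i j hij =>
    hdistinct i j fun l => by rw [← hadj, ← hadj, hij]
  exact ⟨⟨⟨_, hinj⟩, hadj _ _⟩⟩

end PathGraph

section Cographs

variable {V : Type*} {G : SimpleGraph V}

def SimpleGraph.Coloring.IsGrundy (C : G.Coloring ℕ) : Prop :=
  ∀ v, ∀ j < C v, ∃ u, G.Adj v u ∧ C u = j

theorem exists_coloring_isGrundy [Finite V] (G : SimpleGraph V) :
    ∃ C : G.Coloring ℕ, C.IsGrundy := by
  classical
  cases nonempty_fintype V
  let C₀ : G.Coloring ℕ := Coloring.mk (fun v => Fintype.equivFin V v)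
    fun h hc => h.ne ((Fintype.equivFin V).injective (Fin.ext hc))
  obtain ⟨C, -, hmin⟩ :=
    (measure fun C : G.Coloring ℕ => ∑ v, C v).wf.has_min Set.univ ⟨C₀, trivial⟩
  refine ⟨C, fun v j hj => ?_⟩
  by_contra! hfree
  -- otherwise recolouring `v` with `j` gives a proper colouring with a smaller colour sum
  have hvalid : ∀ {a b}, G.Adj a b → Function.update C v j a ≠ Function.update C v j b := by
    intro a b hab
    by_cases ha : a = v <;> by_cases hb : b = v
    · subst ha hb
      exact (G.irrefl hab).elim
    · subst ha
      simpa [hb] using (hfree b hab).symm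
    · subst hb
      simpa [ha] using hfree a hab.symm
    · simpa [ha, hb] using C.valid hab
  have hle : ∀ u, Function.update C v j u ≤ C u := by
    intro u
    rcases eq_or_ne u v with rfl | hu
    · simpa using hj.le
    · simp [hu]
  exact hmin (Coloring.mk _ hvalid) trivial
    (Finset.sum_lt_sum (fun u _ => hle u) ⟨v, Finset.mem_univ v, by simpa using hj⟩)

lemma exists_adj_forall_of_not_pathGraph_four_isIndContained [Finite V]
    (hP4 : ¬ pathGraph 4 ⊴ G) {S : Set V} (hS : G.IsIndepSet S) {T : Finset V}
    (hT : G.IsClique (T : Set V)) (hTne : T.Nonempty) (hTS : ∀ w ∈ T, ∃ x ∈ S, G.Adj w x) :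
    ∃ x ∈ S, ∀ w ∈ T, G.Adj x w := by
  classical
  obtain ⟨w₀, hw₀⟩ := hTne
  obtain ⟨x₀, hx₀, -⟩ := hTS w₀ hw₀
  obtain ⟨x, hxS, hmax⟩ :=
    S.exists_max_image (fun x => (T.filter (G.Adj x)).card) S.toFinite ⟨x₀, hx₀⟩
  refine ⟨x, hxS, fun b hb => ?_⟩
  by_contra hxb
  obtain ⟨y, hyS, hby⟩ := hTS b hb
  have hxy : x ≠ y := by rintro rfl; exact hxb hby.symm
  -- a neighbour `w` of `x` in `T` is one of `y` too, else `x - w - b - y` is an induced `P₄`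
  have hsub : T.filter (G.Adj x) ⊆ T.filter (G.Adj y) := by
    intro w hw
    rw [Finset.mem_filter] at hw ⊢
    refine ⟨hw.1, by_contra fun hyw => hP4 ?_⟩
    have hwb : w ≠ b := by rintro rfl; exact hxb hw.2
    exact pathGraph_four_isIndContained_of_adj hw.2 (hT hw.1 hb hwb) hby hxb (hS hxS hyS hxy)
      fun hwy => hyw hwy.symm
  have hb_new : b ∈ T.filter (G.Adj y) \ T.filter (G.Adj x) := by simp [hb, hby.symm, hxb]
  exact (hmax y hyS).not_gt <|
    Finset.card_lt_card ((Finset.ssubset_iff_of_subset hsub).2 ⟨b, Finset.mem_sdiff.1 hb_new⟩)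

theorem SimpleGraph.Coloring.IsGrundy.exists_isNClique [Finite V] (hP4 : ¬ pathGraph 4 ⊴ G)
    {C : G.Coloring ℕ} (hC : C.IsGrundy) (v : V) : ∃ T : Finset V, G.IsNClique (C v + 1) T := by
  classical
  suffices ∀ d ≤ C v, ∃ T : Finset V, G.IsClique (T : Set V) ∧ T.Nonempty ∧
      (∀ w ∈ T, C v - d ≤ C w) ∧ T.card = d + 1 by
    obtain ⟨T, hT, -, -, hcard⟩ := this (C v) le_rfl
    exact ⟨T, hT, hcard⟩
  intro d hd
  induction d with
  | zero => exact ⟨{v}, by simp, by simp, by simp, by simp⟩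
  | succ d ih =>
    obtain ⟨T, hT, hTne, hTcol, hcard⟩ := ih (by omega)
    have hindep : G.IsIndepSet {u | C u = C v - (d + 1)} :=
      fun a ha b hb _ hab => C.valid hab (ha.trans hb.symm)
    obtain ⟨x, hx, hxT⟩ :=
      exists_adj_forall_of_not_pathGraph_four_isIndContained hP4 hindep hT hTne fun w hw => by
        obtain ⟨u, hwu, hu⟩ := hC w (C v - (d + 1)) (by have := hTcol w hw; omega)
        exact ⟨u, hu, hwu⟩
    have hx : C x = C v - (d + 1) := hx
    have hxT' : x ∉ T := fun h => by have := hTcol x h; omega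
    refine ⟨insert x T, ?_, Finset.insert_nonempty _ _, ?_,
      by rw [Finset.card_insert_of_notMem hxT', hcard]⟩
    · rw [Finset.coe_insert]
      exact hT.insert fun w hw _ => hxT w hw
    · intro w hw
      rcases Finset.mem_insert.1 hw with rfl | hw
      · omega
      · have := hTcol w hw; omega

theorem chromaticNumber_eq_cliqueNum_of_not_pathGraph_four_isIndContained [Finite V]
    (hP4 : ¬ pathGraph 4 ⊴ G) : G.chromaticNumber = G.cliqueNum := by
  obtain ⟨C, hC⟩ := exists_coloring_isGrundy G
  have hlt : ∀ v, C v < G.cliqueNum := fun v => by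
    obtain ⟨T, hT⟩ := hC.exists_isNClique hP4 v
    have := hT.isClique.card_le_cliqueNum
    rw [hT.card_eq] at this
    omega
  refine le_antisymm ?_ G.cliqueNum_le_chromaticNumber
  exact Colorable.chromaticNumber_le
    ⟨Coloring.mk (fun v => ⟨C v, hlt v⟩) fun h hc => C.valid h (congrArg Fin.val hc)⟩

end Cographs

theorem not_pathGraph_four_isIndContained_of_grundyNumber_eq_hadwigerNumber {V : Type*}
    {G : SimpleGraph V}
    (h : ∀ s : Set V, grundyNumber (G.induce s) = hadwigerNumber (G.induce s)) :
    ¬ pathGraph 4 ⊴ G := by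
  rintro ⟨f⟩
  have hP4 := h (Set.range f)
  rw [← f.isoInduceRange.grundyNumber_eq, ← f.isoInduceRange.hadwigerNumber_eq] at hP4
  have := three_le_grundyNumber_pathGraph_four
  have := hadwigerNumber_pathGraph_four_le_two
  omega

/-- Every Γh-perfect graph is perfect. -/
theorem grundy_hadwiger_perfect_is_perfect {V : Type*} [Fintype V] (G : SimpleGraph V)
    (h : ∀ s : Set V, grundyNumber (G.induce s) = hadwigerNumber (G.induce s)) :
    ∀ s : Set V, (G.induce s).chromaticNumber = ((G.induce s).cliqueNum : ℕ∞) := by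
  intro s
  apply chromaticNumber_eq_cliqueNum_of_not_pathGraph_four_isIndContained
  exact fun hP4 => not_pathGraph_four_isIndContained_of_grundyNumber_eq_hadwigerNumber h
    (hP4.trans (Embedding.induce s).isIndContained)
end
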